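/- Let n ≥ 1, let b₁, b₂ ∈ ℤ^n, and let h₁, h₂ : ℝ^n → ℂ be bounded and Lipschitz continuous. Then the Weyl quantization operators on ℓ²(ℤ^n, ℂ) satisfy von Neumann's condition: ‖Q_{ℏ,b₁,h₁} ∘ Q_{ℏ,b₂,h₂} − Q_{ℏ,b₁+b₂,h₁·h₂}‖ → 0 as ℏ → 0 (operator norm; limit over real ℏ ≠ 0), where h₁·h₂ is the pointwise product. Equivalently, ‖Q_ℏ^W(f)Q_ℏ^W(g) − Q_ℏ^W(fg)‖ → 0 for the phase-space functions f = e_{b₁} ⊗ h₁ and g = e_{b₂} ⊗ h₂ on T*T^n. -/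
import Mathlib


open Topology

/-- `ℓ²(ℤⁿ, ℂ)`, the Hilbert space `L²(Tⁿ)` in the Fourier basis. -/
noncomputable abbrev HilSp (n : ℕ) := lp (fun _ : Fin n → ℤ => ℂ) 2

set_option maxHeartbeats 2000000

/-- Von Neumann's condition for Weyl quantization on the torus:  for bounded Lipschitz
`h₁, h₂ : ℝⁿ → ℂ` and `b₁, b₂ ∈ ℤⁿ`, the Weyl quantization operators (specified through
their defining pointwise formulas `(Q_{ℏ,b,h}ψ)(a) = h(2πℏ(a − b/2))·ψ(a − b)`) satisfy
`‖Q_{ℏ,b₁,h₁} ∘ Q_{ℏ,b₂,h₂} − Q_{ℏ,b₁+b₂,h₁·h₂}‖ → 0` as `ℏ → 0` over `ℝ \ {0}`. -/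
theorem stmt15 (n : ℕ) (hn : 1 ≤ n) (b₁ b₂ : Fin n → ℤ)
    (h₁ h₂ : (Fin n → ℝ) → ℂ)
    (hbd₁ : ∃ C : ℝ, ∀ p, ‖h₁ p‖ ≤ C) (hbd₂ : ∃ C : ℝ, ∀ p, ‖h₂ p‖ ≤ C)
    (hLip₁ : ∃ L : NNReal, LipschitzWith L h₁) (hLip₂ : ∃ L : NNReal, LipschitzWith L h₂)
    (Q₁ Q₂ Q₁₂ : ℝ → HilSp n →L[ℂ] HilSp n)
    (hQ₁ : ∀ (hbar : ℝ) (ψ : HilSp n) (a : Fin n → ℤ),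
      (Q₁ hbar ψ) a =
        h₁ (fun i => 2 * Real.pi * hbar * ((a i : ℝ) - (b₁ i : ℝ) / 2)) * ψ (a - b₁))
    (hQ₂ : ∀ (hbar : ℝ) (ψ : HilSp n) (a : Fin n → ℤ),
      (Q₂ hbar ψ) a =
        h₂ (fun i => 2 * Real.pi * hbar * ((a i : ℝ) - (b₂ i : ℝ) / 2)) * ψ (a - b₂))
    (hQ₁₂ : ∀ (hbar : ℝ) (ψ : HilSp n) (a : Fin n → ℤ),
      (Q₁₂ hbar ψ) a =
        (h₁ (fun i => 2 * Real.pi * hbar * ((a i : ℝ) - ((b₁ i : ℝ) + (b₂ i : ℝ)) / 2)) *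
          h₂ fun i => 2 * Real.pi * hbar * ((a i : ℝ) - ((b₁ i : ℝ) + (b₂ i : ℝ)) / 2)) *
        ψ (a - (b₁ + b₂))) :
    Filter.Tendsto (fun hbar : ℝ => ‖(Q₁ hbar).comp (Q₂ hbar) - Q₁₂ hbar‖)
      (𝓝[≠] (0 : ℝ)) (𝓝 0) := by
  obtain ⟨C₁, hC₁⟩ := hbd₁
  obtain ⟨C₂, hC₂⟩ := hbd₂
  obtain ⟨L₁, hL₁⟩ := hLip₁
  obtain ⟨L₂, hL₂⟩ := hLip₂
  have hC₁0 : 0 ≤ C₁ := le_trans (norm_nonneg _) (hC₁ 0)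
  have hC₂0 : 0 ≤ C₂ := le_trans (norm_nonneg _) (hC₂ 0)
  set B₁ : ℝ := ‖(fun i => (b₁ i : ℝ))‖ with hB₁def
  set B₂ : ℝ := ‖(fun i => (b₂ i : ℝ))‖ with hB₂def
  have hB₁0 : 0 ≤ B₁ := norm_nonneg _
  have hB₂0 : 0 ≤ B₂ := norm_nonneg _
  set K : ℝ := Real.pi * (C₁ * (L₂ : ℝ) * B₁ + C₂ * (L₁ : ℝ) * B₂) with hKdef
  have hK0 : 0 ≤ K := by positivity
  have hp : 0 < (2 : ENNReal).toReal := by norm_num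
  have hrp : ∀ x : ℝ, x ^ ((2 : ENNReal).toReal) = x ^ 2 := fun x => by
    rw [show ((2 : ENNReal).toReal) = ((2 : ℕ) : ℝ) by norm_num, Real.rpow_natCast]
  have key : ∀ hbar : ℝ, ‖(Q₁ hbar).comp (Q₂ hbar) - Q₁₂ hbar‖ ≤ K * |hbar| := by
    intro ℏ
    apply ContinuousLinearMap.opNorm_le_bound _ (by positivity)
    intro ψ
    set D : HilSp n →L[ℂ] HilSp n := (Q₁ ℏ).comp (Q₂ ℏ) - Q₁₂ ℏ with hD
    have hpt : ∀ a : Fin n → ℤ, ‖(D ψ) a‖ ≤ K * |ℏ| * ‖ψ (a - (b₁ + b₂))‖ := by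
      intro a
      set u : Fin n → ℝ := fun i => 2 * Real.pi * ℏ * ((a i : ℝ) - (b₁ i : ℝ) / 2) with hu
      set v : Fin n → ℝ :=
        fun i => 2 * Real.pi * ℏ * (((a - b₁) i : ℝ) - (b₂ i : ℝ) / 2) with hv
      set x : Fin n → ℝ :=
        fun i => 2 * Real.pi * ℏ * ((a i : ℝ) - ((b₁ i : ℝ) + (b₂ i : ℝ)) / 2) with hx
      have hcoord : (D ψ) a = (h₁ u * h₂ v - h₁ x * h₂ x) * ψ (a - (b₁ + b₂)) := by
        have hDψ : D ψ = (Q₁ ℏ) ((Q₂ ℏ) ψ) - (Q₁₂ ℏ) ψ := by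
          simp [hD]
        rw [hDψ, lp.coeFn_sub, Pi.sub_apply, hQ₁ ℏ _ a, hQ₂ ℏ ψ (a - b₁), hQ₁₂ ℏ ψ a,
          sub_sub]
        ring
      have hdv : dist v x ≤ Real.pi * |ℏ| * B₁ := by
        rw [dist_pi_le_iff (by positivity)]
        intro i
        have hvx : v i - x i = -(Real.pi * ℏ * (b₁ i : ℝ)) := by
          simp only [hv, hx, Pi.sub_apply]
          push_cast
          ring
        rw [Real.dist_eq, hvx, abs_neg, abs_mul, abs_mul, abs_of_pos Real.pi_pos]
        have hbi : |(b₁ i : ℝ)| ≤ B₁ := by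
          simpa [Real.norm_eq_abs] using norm_le_pi_norm (fun i => (b₁ i : ℝ)) i
        gcongr
      have hdu : dist u x ≤ Real.pi * |ℏ| * B₂ := by
        rw [dist_pi_le_iff (by positivity)]
        intro i
        have hux : u i - x i = Real.pi * ℏ * (b₂ i : ℝ) := by
          simp only [hu, hx]
          ring
        rw [Real.dist_eq, hux, abs_mul, abs_mul, abs_of_pos Real.pi_pos]
        have hbi : |(b₂ i : ℝ)| ≤ B₂ := by
          simpa [Real.norm_eq_abs] using norm_le_pi_norm (fun i => (b₂ i : ℝ)) i
        gcongr
      have hsplit : ‖h₁ u * h₂ v - h₁ x * h₂ x‖ ≤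
          C₁ * ((L₂ : ℝ) * dist v x) + ((L₁ : ℝ) * dist u x) * C₂ := by
        have hre : h₁ u * h₂ v - h₁ x * h₂ x
            = h₁ u * (h₂ v - h₂ x) + (h₁ u - h₁ x) * h₂ x := by ring
        rw [hre]
        refine (norm_add_le _ _).trans (add_le_add ?_ ?_)
        · rw [norm_mul]
          refine mul_le_mul (hC₁ u) ?_ (norm_nonneg _) hC₁0
          rw [← dist_eq_norm]
          exact hL₂.dist_le_mul v x
        · rw [norm_mul]
          refine mul_le_mul ?_ (hC₂ x) (norm_nonneg _) (by positivity)
          rw [← dist_eq_norm]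
          exact hL₁.dist_le_mul u x
      have hcoef : C₁ * ((L₂ : ℝ) * dist v x) + ((L₁ : ℝ) * dist u x) * C₂ ≤ K * |ℏ| := by
        have heq : K * |ℏ| = C₁ * ((L₂ : ℝ) * (Real.pi * |ℏ| * B₁))
            + ((L₁ : ℝ) * (Real.pi * |ℏ| * B₂)) * C₂ := by
          rw [hKdef]; ring
        rw [heq]
        gcongr
      rw [hcoord, norm_mul]
      exact mul_le_mul_of_nonneg_right (hsplit.trans hcoef) (norm_nonneg _)
    -- ℓ² estimate
    have hnormD : ‖D ψ‖ ^ 2 = ∑' a, ‖(D ψ) a‖ ^ 2 := by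
      simpa only [hrp] using lp.norm_rpow_eq_tsum hp (D ψ)
    have hnormψ : ‖ψ‖ ^ 2 = ∑' a, ‖ψ a‖ ^ 2 := by
      simpa only [hrp] using lp.norm_rpow_eq_tsum hp ψ
    have hsψ : Summable fun a => ‖ψ a‖ ^ 2 := by
      simpa only [hrp] using (lp.memℓp ψ).summable hp
    have hsψ' : Summable fun a : Fin n → ℤ => ‖ψ (a - (b₁ + b₂))‖ ^ 2 :=
      ((Equiv.subRight (b₁ + b₂)).summable_iff (f := fun a : Fin n → ℤ => ‖ψ a‖ ^ 2)).2 hsψ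
    have htsum_eq : ∑' a : Fin n → ℤ, ‖ψ (a - (b₁ + b₂))‖ ^ 2 = ∑' a, ‖ψ a‖ ^ 2 :=
      (Equiv.subRight (b₁ + b₂)).tsum_eq (f := fun a : Fin n → ℤ => ‖ψ a‖ ^ 2)
    have hsq : ‖D ψ‖ ^ 2 ≤ (K * |ℏ| * ‖ψ‖) ^ 2 := by
      rw [hnormD]
      calc ∑' a, ‖(D ψ) a‖ ^ 2
          ≤ ∑' a : Fin n → ℤ, (K * |ℏ| * ‖ψ (a - (b₁ + b₂))‖) ^ 2 := by
            refine Summable.tsum_le_tsum (fun a => pow_le_pow_left₀ (norm_nonneg _) (hpt a) 2) ?_ ?_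
            · simpa only [hrp] using (lp.memℓp (D ψ)).summable hp
            · exact (hsψ'.mul_left ((K * |ℏ|) ^ 2)).congr fun a => by ring
        _ = (K * |ℏ|) ^ 2 * ∑' a : Fin n → ℤ, ‖ψ (a - (b₁ + b₂))‖ ^ 2 := by
            simp only [mul_pow]
            exact tsum_mul_left
        _ = (K * |ℏ| * ‖ψ‖) ^ 2 := by
            rw [htsum_eq, ← hnormψ]; ring
    have := Real.sqrt_le_sqrt hsq
    rwa [Real.sqrt_sq (norm_nonneg _), Real.sqrt_sq (by positivity)] at this
  have hlim : Filter.Tendsto (fun ℏ : ℝ => K * |ℏ|) (𝓝[≠] (0 : ℝ)) (𝓝 0) := by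
    have h0 : Filter.Tendsto (fun ℏ : ℝ => K * |ℏ|) (𝓝 (0 : ℝ)) (𝓝 (K * |0|)) :=
      (continuous_const.mul continuous_abs).tendsto 0
    simpa using h0.mono_left nhdsWithin_le_nhds
  exact squeeze_zero (fun _ => norm_nonneg _) key hlim
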